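/- For every formula A of L in which x is free and y is substitutable for x (x does not occur in the scope of ∀y or ∃y), the formula ∀y □_F(A(y/x)^t → ◇_P ∃x A^t) is provable in Q∘S4.t; moreover, if x is not free in A, then □_F(A^t → ◇_P ∃x A^t) is provable in Q∘S4.t. -/

import Mathlib

/-! ## Propositional intuitionistic formulas and IPC -/

inductive PropForm : Type
  | var : ℕ → PropForm
  | falsum : PropForm
  | and : PropForm → PropForm → PropForm
  | or : PropForm → PropForm → PropForm
  | impl : PropForm → PropForm → PropForm

/-- Hilbert-style intuitionistic propositional calculus. -/
inductive IPC : PropForm → Prop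
  | ax1 (A B : PropForm) : IPC (A.impl (B.impl A))
  | ax2 (A B C : PropForm) : IPC ((A.impl (B.impl C)).impl ((A.impl B).impl (A.impl C)))
  | andE1 (A B : PropForm) : IPC ((A.and B).impl A)
  | andE2 (A B : PropForm) : IPC ((A.and B).impl B)
  | andI (A B : PropForm) : IPC (A.impl (B.impl (A.and B)))
  | orI1 (A B : PropForm) : IPC (A.impl (A.or B))
  | orI2 (A B : PropForm) : IPC (B.impl (A.or B))
  | orE (A B C : PropForm) : IPC ((A.impl C).impl ((B.impl C).impl ((A.or B).impl C)))
  | exfalso (A : PropForm) : IPC (PropForm.falsum.impl A)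
  | mp (A B : PropForm) : IPC (A.impl B) → IPC A → IPC B

/-! ## Bimodal propositional formulas and S4.t -/

inductive BForm : Type
  | var : ℕ → BForm
  | falsum : BForm
  | impl : BForm → BForm → BForm
  | boxF : BForm → BForm
  | boxP : BForm → BForm

def BForm.neg (A : BForm) : BForm := A.impl .falsum
def BForm.diaF (A : BForm) : BForm := (A.neg.boxF).neg
def BForm.diaP (A : BForm) : BForm := (A.neg.boxP).neg

/-- The tense propositional logic S4.t: classical propositional logic, S4 axioms
for both `boxF` and `boxP`, the two tense axioms, MP and both necessitations. -/
inductive S4t : BForm → Prop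
  | ax1 (A B : BForm) : S4t (A.impl (B.impl A))
  | ax2 (A B C : BForm) : S4t ((A.impl (B.impl C)).impl ((A.impl B).impl (A.impl C)))
  | ax3 (A B : BForm) : S4t (((B.neg).impl (A.neg)).impl (A.impl B))
  | kF (A B : BForm) : S4t ((A.impl B).boxF.impl (A.boxF.impl B.boxF))
  | tF (A : BForm) : S4t (A.boxF.impl A)
  | fourF (A : BForm) : S4t (A.boxF.impl A.boxF.boxF)
  | kP (A B : BForm) : S4t ((A.impl B).boxP.impl (A.boxP.impl B.boxP))
  | tP (A : BForm) : S4t (A.boxP.impl A)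
  | fourP (A : BForm) : S4t (A.boxP.impl A.boxP.boxP)
  | tense1 (A : BForm) : S4t (A.impl A.diaF.boxP)
  | tense2 (A : BForm) : S4t (A.impl A.diaP.boxF)
  | mp (A B : BForm) : S4t (A.impl B) → S4t A → S4t B
  | necF (A : BForm) : S4t A → S4t A.boxF
  | necP (A : BForm) : S4t A → S4t A.boxP

/-! ## Predicate tense formulas (the language L_T) -/

/-- Formulas of the bimodal predicate language `L_T`.  The classical basis means
that `⊥, →, ∀, □F, □P` are primitive; the remaining connectives are the usual
classical abbreviations, defined below. -/
inductive TForm : Type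
  | falsum : TForm
  | atom : ℕ → List ℕ → TForm
  | impl : TForm → TForm → TForm
  | all : ℕ → TForm → TForm
  | boxF : TForm → TForm
  | boxP : TForm → TForm

def TForm.neg (A : TForm) : TForm := A.impl .falsum
def TForm.and (A B : TForm) : TForm := (A.impl B.neg).neg
def TForm.or (A B : TForm) : TForm := (A.neg).impl B
def TForm.iff (A B : TForm) : TForm := (A.impl B).and (B.impl A)
def TForm.ex (x : ℕ) (A : TForm) : TForm := (TForm.all x A.neg).neg
def TForm.diaF (A : TForm) : TForm := A.neg.boxF.neg
def TForm.diaP (A : TForm) : TForm := A.neg.boxP.neg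

def TForm.freeVars : TForm → Finset ℕ
  | .falsum => ∅
  | .atom _ args => args.toFinset
  | .impl A B => A.freeVars ∪ B.freeVars
  | .all x A => A.freeVars.erase x
  | .boxF A => A.freeVars
  | .boxP A => A.freeVars

/-- Replace every free occurrence of the variable `x` by `y`. -/
def TForm.subst (x y : ℕ) : TForm → TForm
  | .falsum => .falsum
  | .atom p args => .atom p (args.map fun v => if v = x then y else v)
  | .impl A B => .impl (A.subst x y) (B.subst x y)
  | .all z A => if z = x then .all z A else .all z (A.subst x y)
  | .boxF A => .boxF (A.subst x y)
  | .boxP A => .boxP (A.subst x y)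

/-- `y` is substitutable for `x`: no free occurrence of `x` lies in the scope of
a quantifier binding `y`. -/
def TForm.substOK (x y : ℕ) : TForm → Prop
  | .falsum => True
  | .atom _ _ => True
  | .impl A B => A.substOK x y ∧ B.substOK x y
  | .all z A => z = x ∨ ((z = y → x ∉ A.freeVars) ∧ A.substOK x y)
  | .boxF A => A.substOK x y
  | .boxP A => A.substOK x y

/-- Substitution of `L_T`-formulas for the propositional letters of a bimodal
propositional formula. -/
def BForm.tsubst (s : ℕ → TForm) : BForm → TForm
  | .var n => s n
  | .falsum => .falsum
  | .impl A B => .impl (A.tsubst s) (B.tsubst s)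
  | .boxF A => .boxF (A.tsubst s)
  | .boxP A => .boxP (A.tsubst s)

/-! ## The predicate tense logic Q∘S4.t -/

inductive QoS4t : TForm → Prop
  /-- all substitution instances of theorems of S4.t -/
  | s4t (φ : BForm) (s : ℕ → TForm) : S4t φ → QoS4t (φ.tsubst s)
  /-- (UI°)  ∀y(∀x A → A(y/x)) -/
  | ui (x y : ℕ) (A : TForm) (hok : A.substOK x y) :
      QoS4t (.all y ((TForm.all x A).impl (A.subst x y)))
  /-- ∀x(A → B) → (∀x A → ∀x B) -/
  | distrib (x : ℕ) (A B : TForm) :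
      QoS4t ((TForm.all x (A.impl B)).impl ((TForm.all x A).impl (TForm.all x B)))
  /-- ∀x∀y A ↔ ∀y∀x A -/
  | comm (x y : ℕ) (A : TForm) :
      QoS4t ((TForm.all x (TForm.all y A)).iff (TForm.all y (TForm.all x A)))
  /-- A → ∀x A, x not free in A -/
  | vac (x : ℕ) (A : TForm) (h : x ∉ A.freeVars) : QoS4t (A.impl (.all x A))
  /-- (NID)  ∀x A → A, x not free in A -/
  | nid (x : ℕ) (A : TForm) (h : x ∉ A.freeVars) : QoS4t ((TForm.all x A).impl A)
  /-- (CBF_F)  □F ∀x A → ∀x □F A -/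
  | cbfF (x : ℕ) (A : TForm) : QoS4t ((TForm.all x A).boxF.impl (TForm.all x A.boxF))
  | mp (A B : TForm) : QoS4t (A.impl B) → QoS4t A → QoS4t B
  | gen (x : ℕ) (A : TForm) : QoS4t A → QoS4t (.all x A)
  | necF (A : TForm) : QoS4t A → QoS4t A.boxF
  | necP (A : TForm) : QoS4t A → QoS4t A.boxP

/-! ## The language L of intuitionistic predicate logic and IQC -/

inductive IForm : Type
  | falsum : IForm
  | atom : ℕ → List ℕ → IForm
  | and : IForm → IForm → IForm
  | or : IForm → IForm → IForm
  | impl : IForm → IForm → IForm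
  | all : ℕ → IForm → IForm
  | ex : ℕ → IForm → IForm

def IForm.freeVars : IForm → Finset ℕ
  | .falsum => ∅
  | .atom _ args => args.toFinset
  | .and A B => A.freeVars ∪ B.freeVars
  | .or A B => A.freeVars ∪ B.freeVars
  | .impl A B => A.freeVars ∪ B.freeVars
  | .all x A => A.freeVars.erase x
  | .ex x A => A.freeVars.erase x

def IForm.subst (x y : ℕ) : IForm → IForm
  | .falsum => .falsum
  | .atom p args => .atom p (args.map fun v => if v = x then y else v)
  | .and A B => .and (A.subst x y) (B.subst x y)
  | .or A B => .or (A.subst x y) (B.subst x y)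
  | .impl A B => .impl (A.subst x y) (B.subst x y)
  | .all z A => if z = x then .all z A else .all z (A.subst x y)
  | .ex z A => if z = x then .ex z A else .ex z (A.subst x y)

def IForm.substOK (x y : ℕ) : IForm → Prop
  | .falsum => True
  | .atom _ _ => True
  | .and A B => A.substOK x y ∧ B.substOK x y
  | .or A B => A.substOK x y ∧ B.substOK x y
  | .impl A B => A.substOK x y ∧ B.substOK x y
  | .all z A => z = x ∨ ((z = y → x ∉ A.freeVars) ∧ A.substOK x y)
  | .ex z A => z = x ∨ ((z = y → x ∉ A.freeVars) ∧ A.substOK x y)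

/-- Substitution of `L`-formulas for the propositional letters of an
intuitionistic propositional formula. -/
def PropForm.isubst (s : ℕ → IForm) : PropForm → IForm
  | .var n => s n
  | .falsum => .falsum
  | .and A B => .and (A.isubst s) (B.isubst s)
  | .or A B => .or (A.isubst s) (B.isubst s)
  | .impl A B => .impl (A.isubst s) (B.isubst s)

/-- The intuitionistic predicate calculus IQC. -/
inductive IQC : IForm → Prop
  /-- all substitution instances of theorems of IPC -/
  | ipc (φ : PropForm) (s : ℕ → IForm) : IPC φ → IQC (φ.isubst s)
  /-- (UI)  ∀x A → A(y/x) -/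
  | ui (x y : ℕ) (A : IForm) (hok : A.substOK x y) :
      IQC ((IForm.all x A).impl (A.subst x y))
  /-- A(y/x) → ∃x A -/
  | exI (x y : ℕ) (A : IForm) (hok : A.substOK x y) :
      IQC ((A.subst x y).impl (IForm.ex x A))
  /-- ∀x(A → B) → (A → ∀x B), x not free in A -/
  | allImp (x : ℕ) (A B : IForm) (h : x ∉ A.freeVars) :
      IQC ((IForm.all x (A.impl B)).impl (A.impl (IForm.all x B)))
  /-- ∀x(A → B) → (∃x A → B), x not free in B -/
  | exImp (x : ℕ) (A B : IForm) (h : x ∉ B.freeVars) :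
      IQC ((IForm.all x (A.impl B)).impl ((IForm.ex x A).impl B))
  | mp (A B : IForm) : IQC (A.impl B) → IQC A → IQC B
  | gen (x : ℕ) (A : IForm) : IQC A → IQC (.all x A)

/-! ## The temporal Gödel translation -/

def IForm.t : IForm → TForm
  | .falsum => .falsum
  | .atom p args => .boxF (.atom p args)
  | .and A B => TForm.and A.t B.t
  | .or A B => TForm.or A.t B.t
  | .impl A B => .boxF (A.t.impl B.t)
  | .all x A => .boxF (.all x A.t)
  | .ex x A => TForm.diaP (TForm.ex x A.t)

/-- `closure [x₁,…,xₙ] A = ∀x₁ ⋯ ∀xₙ A`. -/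
def TForm.closure (xs : List ℕ) (A : TForm) : TForm := xs.foldr TForm.all A

/-! ## Generalized Kripke semantics for Q∘S4.t -/

/-- A Q∘S4.t-frame: a reflexive transitive relation on a nonempty set of worlds,
a nonempty constant outer domain `U`, and nonempty increasing inner domains. -/
structure TFrame where
  W : Type
  U : Type
  hW : Nonempty W
  hU : Nonempty U
  R : W → W → Prop
  refl : ∀ w, R w w
  trans : ∀ {u v w}, R u v → R v w → R u w
  D : W → Set U
  Dne : ∀ w, (D w).Nonempty
  Dmono : ∀ {w v}, R w v → D w ⊆ D v

/-- A model based on a Q∘S4.t-frame: interprets each predicate symbol at each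
world as a relation on the outer domain. -/
structure TModel (F : TFrame) where
  I : F.W → ℕ → List F.U → Prop

/-- Truth of an `L_T`-formula at a world under an assignment. -/
def TModel.truth {F : TFrame} (M : TModel F) : F.W → (ℕ → F.U) → TForm → Prop
  | _, _, .falsum => False
  | w, σ, .atom p args => M.I w p (args.map σ)
  | w, σ, .impl A B => M.truth w σ A → M.truth w σ B
  | w, σ, .all x A =>
      ∀ τ : ℕ → F.U, (∀ y, y ≠ x → τ y = σ y) → τ x ∈ F.D w → M.truth w τ A
  | w, σ, .boxF A => ∀ v, F.R w v → M.truth v σ A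
  | w, σ, .boxP A => ∀ v, F.R v w → M.truth v σ A

/-- Validity of an `L_T`-formula in a Q∘S4.t-frame. -/
def TFrame.valid (F : TFrame) (A : TForm) : Prop :=
  ∀ M : TModel F, ∀ w : F.W, ∀ σ : ℕ → F.U, M.truth w σ A

/-! ## Kripke semantics for IQC -/

/-- An IQC-frame: a partial order on a nonempty set of worlds with nonempty
increasing domains. -/
structure IFrame where
  W : Type
  α : Type
  hW : Nonempty W
  R : W → W → Prop
  refl : ∀ w, R w w
  trans : ∀ {u v w}, R u v → R v w → R u w
  antisymm : ∀ {u v}, R u v → R v u → u = v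
  D : W → Set α
  Dne : ∀ w, (D w).Nonempty
  Dmono : ∀ {w v}, R w v → D w ⊆ D v

/-- An IQC-model: `I w P ⊆ (D w)ⁿ`, increasing along `R`. -/
structure IModel (F : IFrame) where
  I : F.W → ℕ → List F.α → Prop
  Isub : ∀ w p as, I w p as → ∀ a ∈ as, a ∈ F.D w
  Imono : ∀ {w v} (p : ℕ) (as : List F.α), F.R w v → I w p as → I v p as

/-- Intuitionistic truth of an `L`-formula at a world under an assignment. -/
def IModel.truth {F : IFrame} (M : IModel F) : F.W → (ℕ → F.α) → IForm → Prop
  | _, _, .falsum => False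
  | w, σ, .atom p args => M.I w p (args.map σ)
  | w, σ, .and A B => M.truth w σ A ∧ M.truth w σ B
  | w, σ, .or A B => M.truth w σ A ∨ M.truth w σ B
  | w, σ, .impl A B => ∀ v, F.R w v → M.truth v σ A → M.truth v σ B
  | w, σ, .all x A =>
      ∀ v, F.R w v → ∀ τ : ℕ → F.α, (∀ y, y ≠ x → τ y = σ y) → τ x ∈ F.D v →
        M.truth v τ A
  | w, σ, .ex x A =>
      ∃ τ : ℕ → F.α, (∀ y, y ≠ x → τ y = σ y) ∧ τ x ∈ F.D w ∧ M.truth w τ A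

/-! ## The associated Q∘S4.t-model M̄ -/

/-- The Q∘S4.t-frame associated to an IQC-frame: same worlds and relation,
outer domain `U = ⋃ { D_w ∣ w ∈ W }`, same inner domains. -/
def IFrame.bar (F : IFrame) : TFrame where
  W := F.W
  U := {a : F.α // ∃ w, a ∈ F.D w}
  hW := F.hW
  hU := by
    obtain ⟨w⟩ := F.hW
    obtain ⟨a, ha⟩ := F.Dne w
    exact ⟨⟨a, w, ha⟩⟩
  R := F.R
  refl := F.refl
  trans := F.trans
  D := fun w => {a | a.1 ∈ F.D w}
  Dne := fun w => by
    obtain ⟨a, ha⟩ := F.Dne w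
    exact ⟨⟨a, w, ha⟩, ha⟩
  Dmono := fun h _ ha => F.Dmono h ha

/-- The Q∘S4.t-model `M̄` associated to an IQC-model `M`. -/
def IModel.bar {F : IFrame} (M : IModel F) : TModel F.bar where
  I := fun w p as => M.I w p (as.map Subtype.val)

/-! Since `∃x A^t` is `¬C` for `C = ∀x ¬A^t`, both parts come from the S4.t-tautology
`(C → ¬B) → (B → ◇P ¬C)` (contraposition and T for `□P`). For `B = A(y/x)^t` its premise,
under `∀y`, is the (UI°) instance for `¬A^t`; for `x` not free in `A` it is the (NID)
instance. Necessitation, pushed under `∀y` by (CBF_F), supplies the outer `□F`. -/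

lemma IForm.freeVars_t (A : IForm) : A.t.freeVars = A.freeVars := by
  induction A <;>
    simp_all [IForm.t, IForm.freeVars, TForm.freeVars, TForm.and, TForm.or,
      TForm.neg, TForm.diaP, TForm.ex]

lemma IForm.subst_t (A : IForm) (x y : ℕ) : (A.subst x y).t = A.t.subst x y := by
  induction A with
  | all z A ih | ex z A ih =>
      by_cases h : z = x <;>
        simp [IForm.subst, IForm.t, TForm.subst, TForm.diaP, TForm.ex, TForm.neg, h, ih]
  | _ =>
      simp_all [IForm.subst, IForm.t, TForm.subst, TForm.and, TForm.or, TForm.neg]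

lemma IForm.substOK.t {A : IForm} {x y : ℕ} (h : A.substOK x y) : A.t.substOK x y := by
  induction A <;>
    simp_all [IForm.substOK, IForm.t, TForm.substOK, TForm.and, TForm.or, TForm.neg,
      TForm.diaP, TForm.ex, TForm.freeVars, IForm.freeVars_t] <;>
    tauto

namespace QoS4t

lemma imp_const (A B : TForm) : QoS4t (A.impl (B.impl A)) :=
  s4t ((BForm.var 0).impl ((BForm.var 1).impl (BForm.var 0)))
    (fun | 0 => A | _ => B) (S4t.ax1 _ _)

lemma imp_distrib (A B C : TForm) :
    QoS4t ((A.impl (B.impl C)).impl ((A.impl B).impl (A.impl C))) :=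
  s4t (((BForm.var 0).impl ((BForm.var 1).impl (BForm.var 2))).impl
      (((BForm.var 0).impl (BForm.var 1)).impl ((BForm.var 0).impl (BForm.var 2))))
    (fun | 0 => A | 1 => B | _ => C) (S4t.ax2 _ _ _)

lemma boxP_imp (A : TForm) : QoS4t (A.boxP.impl A) :=
  s4t ((BForm.var 0).boxP.impl (BForm.var 0)) (fun _ => A) (S4t.tP _)

lemma imp_imp_of_imp (X : TForm) {A B : TForm} (h : QoS4t (A.impl B)) :
    QoS4t ((X.impl A).impl (X.impl B)) :=
  mp _ _ (imp_distrib X A B) (mp _ _ (imp_const _ X) h)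

lemma imp_trans {A B C : TForm} (hAB : QoS4t (A.impl B)) (hBC : QoS4t (B.impl C)) :
    QoS4t (A.impl C) :=
  mp _ _ (imp_imp_of_imp A hBC) hAB

lemma imp_swap {A B C : TForm} (h : QoS4t (A.impl (B.impl C))) :
    QoS4t (B.impl (A.impl C)) :=
  imp_trans (imp_const B A) (mp _ _ (imp_distrib A B C) h)

lemma imp_swap_imp (A B C : TForm) :
    QoS4t ((A.impl (B.impl C)).impl (B.impl (A.impl C))) :=
  imp_swap (imp_trans (imp_const B A) (imp_swap (imp_distrib A B C)))

lemma imp_diaP (A : TForm) : QoS4t (A.impl A.diaP) :=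
  imp_swap (boxP_imp A.neg)

lemma imp_neg_imp_imp_diaP_neg (A B : TForm) :
    QoS4t ((A.impl B.neg).impl (B.impl A.neg.diaP)) :=
  imp_trans (imp_swap_imp A B .falsum) (imp_imp_of_imp B (imp_diaP A.neg))

lemma all_of_imp {A B : TForm} (x : ℕ) (hAB : QoS4t (A.impl B)) (hA : QoS4t (.all x A)) :
    QoS4t (.all x B) :=
  mp _ _ (mp _ _ (distrib x A B) (gen x _ hAB)) hA

end QoS4t

/-- For every formula `A` of `L` in which `x` is free and `y` is substitutable
for `x`, the formula `∀y □F(A(y/x)^t → ◇P ∃x A^t)` is provable in Q∘S4.t;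
moreover, if `x` is not free in `A`, then `□F(A^t → ◇P ∃x A^t)` is provable in
Q∘S4.t. -/
theorem all_boxF_exI_provable (A : IForm) (x y : ℕ) :
    (x ∈ A.freeVars → A.substOK x y →
      QoS4t (TForm.all y (TForm.boxF
        ((A.subst x y).t.impl (TForm.diaP (TForm.ex x A.t)))))) ∧
    (x ∉ A.freeVars →
      QoS4t (TForm.boxF (A.t.impl (TForm.diaP (TForm.ex x A.t))))) := by
  have key := QoS4t.imp_neg_imp_imp_diaP_neg (TForm.all x A.t.neg)
  refine ⟨fun _ hok => ?_, fun hx => ?_⟩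
  · have hui := QoS4t.ui x y A.t.neg ⟨hok.t, trivial⟩
    rw [IForm.subst_t]
    exact QoS4t.mp _ _ (QoS4t.cbfF y _) (QoS4t.necF _ (QoS4t.all_of_imp y (key _) hui))
  · have hx' : x ∉ A.t.neg.freeVars := by
      simpa [TForm.neg, TForm.freeVars, IForm.freeVars_t] using hx
    exact QoS4t.necF _ (QoS4t.mp _ _ (key _) (QoS4t.nid x _ hx'))
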